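/- arXiv:1409.8177 — 4 statements merged into one kernel-verified Lean document; each statement's English description precedes it below -/
import Mathlib

section
/- Let f : ℤ^n → ℤ^n be a map that is coordinate-wise ℤ≥0-linear, i.e., f(∑ᵢ mᵢεᵢeᵢ) = ∑ᵢ mᵢ f(εᵢeᵢ) for all mᵢ ∈ ℤ≥0 and εᵢ ∈ {1,-1}, and suppose f is triangularizable, i.e., there is an ordering r₁,…,rₙ of {1,…,n} such that f(ε e_{rᵢ}) + ε e_{rᵢ} lies in the span ℤe_{r_{i+1}} ⊕ ⋯ ⊕ ℤe_{rₙ} for all 1 ≤ i ≤ n and ε ∈ {1,-1}. Then f is bijective. -/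
/-!
In the order given by the permutation `r`, the map is unitriangular with diagonal `-1`:
by ℤ≥0-linearity `f x` is the sum of the images of the signed basis pieces of `x`, and
triangularity says that coordinate `r j` of `f x` is `-x (r j)` plus terms depending only on
the coordinates `x (r i)` with `i < j`. Such a map is injective by well-founded induction and
surjective by solving for the coordinates one after another by well-founded recursion.
-/

open Finset

theorem Function.bijective_of_apply_add_self_dependsOn_wf {ι G : Type*} [AddGroup G]
    {s : ι → ι → Prop} (hs : WellFounded s) (F : (ι → G) → ι → G)
    (hF : ∀ x y j, (∀ i, s i j → x i = y i) → F x j + x j = F y j + y j) :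
    Function.Bijective F := by
  classical
  refine ⟨fun x y hxy => funext fun j =>
    hs.induction (C := fun j => x j = y j) j fun j ih => ?_, fun y => ?_⟩
  · have h := hF x y j ih
    rwa [hxy, add_right_inj] at h
  · -- choose `x j` by well-founded recursion so that coordinate `j` of `F x` comes out as `y j`
    let extend (j : ι) (p : ∀ i, s i j → G) : ι → G := fun i => if h : s i j then p i h else 0
    let diag (j : ι) (p : ∀ i, s i j → G) : G := F (extend j p) j + extend j p j
    let x : ι → G := hs.fix fun j p => -y j + diag j p
    refine ⟨x, funext fun j => ?_⟩
    have hdiag : F x j + x j = diag j fun i _ => x i :=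
      hF _ _ j fun i hi => by simp only [extend, dif_pos hi]
    have hx : x j = -y j + diag j fun i _ => x i := hs.fix_eq _ j
    rw [← hdiag, eq_neg_add_iff_add_eq, add_left_inj] at hx
    exact hx.symm

-- Unlike `Int.sign` never `0`, so that `v = v.natAbs * nonnegSign v` with a unit factor.
def nonnegSign (v : ℤ) : ℤ := if 0 ≤ v then 1 else -1

theorem nonnegSign_eq_one_or_neg_one (v : ℤ) : nonnegSign v = 1 ∨ nonnegSign v = -1 := by
  unfold nonnegSign; split <;> simp

theorem natAbs_mul_nonnegSign (v : ℤ) : (v.natAbs : ℤ) * nonnegSign v = v := by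
  unfold nonnegSign; split <;> omega

section

variable {n : ℕ}

def CoordwiseNatLinear (f : (Fin n → ℤ) → (Fin n → ℤ)) : Prop :=
  ∀ (m : Fin n → ℕ) (ε : Fin n → ℤ), (∀ i, ε i = 1 ∨ ε i = -1) →
    f (fun j => (m j : ℤ) * ε j) = ∑ i, (m i : ℤ) • f (ε i • (Pi.single i 1 : Fin n → ℤ))

def TriangularAlong (r : Equiv.Perm (Fin n)) (f : (Fin n → ℤ) → (Fin n → ℤ)) : Prop :=
  ∀ (i : Fin n) (ε : ℤ), ε = 1 ∨ ε = -1 → ∀ j : Fin n, j ≤ i →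
    f (ε • (Pi.single (r i) 1 : Fin n → ℤ)) (r j) + (ε • (Pi.single (r i) 1 : Fin n → ℤ)) (r j) = 0

variable {f : (Fin n → ℤ) → (Fin n → ℤ)} {r : Equiv.Perm (Fin n)}

theorem CoordwiseNatLinear.apply_eq_sum_natAbs_smul (hlin : CoordwiseNatLinear f) (x : Fin n → ℤ) :
    f x = ∑ i, ((x i).natAbs : ℤ) • f (nonnegSign (x i) • (Pi.single i 1 : Fin n → ℤ)) := by
  have h := hlin (fun i => (x i).natAbs) (fun i => nonnegSign (x i))
    fun i => nonnegSign_eq_one_or_neg_one _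
  simpa only [natAbs_mul_nonnegSign] using h

theorem TriangularAlong.natAbs_smul_apply (hr : TriangularAlong r f)
    {i j : Fin n} (hji : j ≤ i) (v : ℤ) :
    ((v.natAbs : ℤ) • f (nonnegSign v • (Pi.single (r i) 1 : Fin n → ℤ))) (r j) =
      if j = i then -v else 0 := by
  have h := hr i _ (nonnegSign_eq_one_or_neg_one v) j hji
  rw [Pi.smul_apply, smul_eq_mul, eq_neg_of_add_eq_zero_left h]
  split_ifs with hij
  · subst hij
    simp only [Pi.smul_apply, Pi.single_eq_same, smul_eq_mul, mul_one, mul_neg,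
      natAbs_mul_nonnegSign]
  · simp [r.injective.eq_iff, hij]

theorem apply_perm_add_self_eq_sum_Iio (hlin : CoordwiseNatLinear f) (hr : TriangularAlong r f)
    (x : Fin n → ℤ) (j : Fin n) :
    f x (r j) + x (r j) = ∑ k ∈ Iio j, (((x (r k)).natAbs : ℤ) •
      f (nonnegSign (x (r k)) • (Pi.single (r k) 1 : Fin n → ℤ))) (r j) := by
  set t : Fin n → ℤ := fun k =>
    (((x (r k)).natAbs : ℤ) • f (nonnegSign (x (r k)) • (Pi.single (r k) 1 : Fin n → ℤ))) (r j)
  have hupper : ∑ k, t k = ∑ k ∈ Iic j, t k :=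
    (sum_subset (subset_univ _) fun k _ hk => by
      rw [mem_Iic, not_le] at hk
      simp only [t, hr.natAbs_smul_apply hk.le, if_neg hk.ne]).symm
  have hdiag : t j = -x (r j) := by
    simp only [t, hr.natAbs_smul_apply le_rfl, if_pos]
  rw [hlin.apply_eq_sum_natAbs_smul, Finset.sum_apply, ← Equiv.sum_comp r, hupper, ← Iio_insert,
    sum_insert notMem_Iio_self, hdiag]
  abel

end

/-- A coordinate-wise ℤ≥0-linear, triangularizable map f : ℤ^n → ℤ^n is bijective. -/
theorem stmt_0 (n : ℕ) (f : (Fin n → ℤ) → (Fin n → ℤ))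
    (hlin : ∀ (m : Fin n → ℕ) (ε : Fin n → ℤ), (∀ i, ε i = 1 ∨ ε i = -1) →
      f (fun j => (m j : ℤ) * ε j) = ∑ i, (m i : ℤ) • f (ε i • (Pi.single i 1 : Fin n → ℤ)))
    (htri : ∃ r : Equiv.Perm (Fin n), ∀ (i : Fin n) (ε : ℤ), ε = 1 ∨ ε = -1 →
      ∀ j : Fin n, j ≤ i →
        f (ε • (Pi.single (r i) 1 : Fin n → ℤ)) (r j) + (ε • (Pi.single (r i) 1 : Fin n → ℤ)) (r j) = 0) :
    Function.Bijective f := by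
  obtain ⟨r, hr⟩ := htri
  refine Function.bijective_of_apply_add_self_dependsOn_wf (s := fun a b => r.symm a < r.symm b)
    (InvImage.wf _ wellFounded_lt) f fun x y j hxy => ?_
  rw [← r.apply_symm_apply j, apply_perm_add_self_eq_sum_Iio hlin hr,
    apply_perm_add_self_eq_sum_Iio hlin hr]
  refine sum_congr rfl fun k hk => ?_
  rw [hxy (r k) (by simpa using hk)]
end

section
/- Let a, b, c be positive integers with a ≥ b. In ℚ(x₁,x₂,x₃), define Y = (x₁^c x₂^{a−b} + x₂^a + x₃^c)/(x₁x₃) and z₃ = (x₁^c + x₂^b)/x₃. Then Y·x₁·z₃^{c−1} = x₂^{a−b}z₃^c + (x₁^c + x₂^b)^{c−1}; equivalently, Y = (x₂^{a−b}z₃^c + (x₁^c + x₂^b)^{c−1})/(x₁ z₃^{c−1}), so Y ∈ ℤ[x₁^{±1}, x₂^{±1}, z₃^{±1}]. -/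
open MvPolynomial

/-! Clearing the denominator `x₁ x₃` and substituting `x₃ = (x₁^c + x₂^b)/z₃` turns the claimed
identity into a polynomial identity in `x₁, x₂, z₃`. It exhibits `Y` as a polynomial in
`x₂, z₃, x₁^c + x₂^b` times `x₁⁻¹ z₃^{-(c-1)}`, which lies in the Laurent ring because
`x₁`, `z₃` are nonzero. -/

theorem MvPolynomial.X_pow_add_X_pow_ne_zero {σ R : Type*} [CommSemiring R] [CharZero R]
    (i j : σ) (m n : ℕ) : (X i ^ m + X j ^ n : MvPolynomial σ R) ≠ 0 := fun h => by
  simpa [one_add_one_eq_two] using congrArg (eval fun _ => (1 : R)) h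

section Field

variable {F : Type*} [Field F]

theorem exchange_identity {x₁ x₂ x₃ : F} (hx₁ : x₁ ≠ 0) (hx₃ : x₃ ≠ 0) {a b c : ℕ}
    (hc : 0 < c) (hba : b ≤ a) :
    (x₁ ^ c * x₂ ^ (a - b) + x₂ ^ a + x₃ ^ c) / (x₁ * x₃) * x₁ * ((x₁ ^ c + x₂ ^ b) / x₃) ^ (c - 1) =
      x₂ ^ (a - b) * ((x₁ ^ c + x₂ ^ b) / x₃) ^ c + (x₁ ^ c + x₂ ^ b) ^ (c - 1) := by
  obtain ⟨d, rfl⟩ := Nat.exists_eq_add_of_lt hc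
  obtain ⟨e, rfl⟩ := Nat.exists_eq_add_of_le' hba
  simp only [zero_add, Nat.add_sub_cancel, div_pow]
  field_simp
  ring

theorem Subring.mem_of_mul_mul_pow_eq {S : Subring F} {y x z w : F} {n : ℕ} (hx : x ≠ 0)
    (hz : z ≠ 0) (hx' : x⁻¹ ∈ S) (hz' : z⁻¹ ∈ S) (hw : w ∈ S) (h : y * x * z ^ n = w) :
    y ∈ S := by
  have hy : y = w * x⁻¹ * z⁻¹ ^ n := by
    rw [← h, inv_pow, mul_right_comm (y * x), mul_inv_cancel_right₀ hx,
      mul_inv_cancel_right₀ (pow_ne_zero n hz)]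
  rw [hy]
  exact S.mul_mem (S.mul_mem hw hx') (S.pow_mem hz' n)

end Field

theorem stmt_14_general (a b c : ℕ) (hc : 0 < c) (hba : b ≤ a) :
    let K := FractionRing (MvPolynomial (Fin 3) ℤ)
    let x₁ : K := algebraMap (MvPolynomial (Fin 3) ℤ) K (X 0)
    let x₂ : K := algebraMap (MvPolynomial (Fin 3) ℤ) K (X 1)
    let x₃ : K := algebraMap (MvPolynomial (Fin 3) ℤ) K (X 2)
    let Y : K := (x₁ ^ c * x₂ ^ (a - b) + x₂ ^ a + x₃ ^ c) / (x₁ * x₃)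
    let z₃ : K := (x₁ ^ c + x₂ ^ b) / x₃
    Y * x₁ * z₃ ^ (c - 1) = x₂ ^ (a - b) * z₃ ^ c + (x₁ ^ c + x₂ ^ b) ^ (c - 1) ∧
    Y ∈ Subring.closure ({x₁, x₂, z₃, x₁⁻¹, x₂⁻¹, z₃⁻¹} : Set K) := by
  intro K x₁ x₂ x₃ Y z₃
  have ne_zero {p : MvPolynomial (Fin 3) ℤ} (hp : p ≠ 0) : algebraMap _ K p ≠ 0 :=
    (map_ne_zero_iff _ (IsFractionRing.injective _ K)).mpr hp
  have hx₁ : x₁ ≠ 0 := ne_zero (X_ne_zero 0)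
  have hx₃ : x₃ ≠ 0 := ne_zero (X_ne_zero 2)
  have hz₃ : z₃ ≠ 0 :=
    div_ne_zero (by simpa [x₁, x₂] using ne_zero (X_pow_add_X_pow_ne_zero 0 1 c b)) hx₃
  have key := exchange_identity (x₂ := x₂) hx₁ hx₃ hc hba
  set S := Subring.closure ({x₁, x₂, z₃, x₁⁻¹, x₂⁻¹, z₃⁻¹} : Set K)
  have gen {t : K} (ht : t ∈ ({x₁, x₂, z₃, x₁⁻¹, x₂⁻¹, z₃⁻¹} : Set K)) : t ∈ S :=
    Subring.subset_closure ht
  have hw : x₂ ^ (a - b) * z₃ ^ c + (x₁ ^ c + x₂ ^ b) ^ (c - 1) ∈ S :=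
    S.add_mem (S.mul_mem (S.pow_mem (gen (by simp)) _) (S.pow_mem (gen (by simp)) _))
      (S.pow_mem (S.add_mem (S.pow_mem (gen (by simp)) _) (S.pow_mem (gen (by simp)) _)) _)
  exact ⟨key, S.mem_of_mul_mul_pow_eq hx₁ hz₃ (gen (by simp)) (gen (by simp)) hw key⟩

/-- Y·x₁·z₃^{c−1} = x₂^{a−b} z₃^c + (x₁^c + x₂^b)^{c−1}, and hence Y lies in the
Laurent ring ℤ[x₁^{±1}, x₂^{±1}, z₃^{±1}]. -/
theorem stmt_14 (a b c : ℕ) (ha : 0 < a) (hb : 0 < b) (hc : 0 < c) (hba : b ≤ a) :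
    let K := FractionRing (MvPolynomial (Fin 3) ℤ)
    let x₁ : K := algebraMap (MvPolynomial (Fin 3) ℤ) K (X 0)
    let x₂ : K := algebraMap (MvPolynomial (Fin 3) ℤ) K (X 1)
    let x₃ : K := algebraMap (MvPolynomial (Fin 3) ℤ) K (X 2)
    let Y : K := (x₁ ^ c * x₂ ^ (a - b) + x₂ ^ a + x₃ ^ c) / (x₁ * x₃)
    let z₃ : K := (x₁ ^ c + x₂ ^ b) / x₃
    Y * x₁ * z₃ ^ (c - 1) = x₂ ^ (a - b) * z₃ ^ c + (x₁ ^ c + x₂ ^ b) ^ (c - 1) ∧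
    Y ∈ Subring.closure ({x₁, x₂, z₃, x₁⁻¹, x₂⁻¹, z₃⁻¹} : Set K) :=
  stmt_14_general a b c hc hba
end

section
/- Let a₁, a₂ be positive integers with c = min(a₁,a₂), and consider the maximal Dyck path D of type a₁ × a₂ (the lattice path from (0,0) to (a₁,a₂) closest to but not above the diagonal). Then D has exactly c corners (a corner being a horizontal edge immediately followed by a vertical edge). -/
/-!
The height of the path after `x` horizontal steps is `⌊x a₂ / a₁⌋`. If `a₁ ≤ a₂` the slope is at
least one, so the height rises at every horizontal step and all `a₁` horizontal edges are corners.
If `a₂ ≤ a₁` the height rises by at most one per step, so the corners count the total rise `a₂`.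
-/

open Finset

theorem Nat.mul_div_add_one_le_succ_mul_div {a b : ℕ} (ha : 0 < a) (hab : a ≤ b) (x : ℕ) :
    x * b / a + 1 ≤ (x + 1) * b / a :=
  calc x * b / a + 1 = (x * b + a) / a := (Nat.add_div_right _ ha).symm
    _ ≤ (x * b + b) / a := Nat.div_le_div_right (by omega)
    _ = (x + 1) * b / a := by rw [Nat.succ_mul]

theorem Nat.succ_mul_div_le_mul_div_add_one {a b : ℕ} (ha : 0 < a) (hba : b ≤ a) (x : ℕ) :
    (x + 1) * b / a ≤ x * b / a + 1 :=
  calc (x + 1) * b / a = (x * b + b) / a := by rw [Nat.succ_mul]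
    _ ≤ (x * b + a) / a := Nat.div_le_div_right (by omega)
    _ = x * b / a + 1 := Nat.add_div_right _ ha

theorem Nat.monotone_mul_div (a b : ℕ) : Monotone fun x => x * b / a :=
  fun _ _ hxy => Nat.div_le_div_right (Nat.mul_le_mul_right _ hxy)

theorem card_filter_lt_succ_eq_sub {f : ℕ → ℕ} (hf : Monotone f)
    (hstep : ∀ x, f (x + 1) ≤ f x + 1) (n : ℕ) :
    ((range n).filter fun x => f x < f (x + 1)).card = f n - f 0 := by
  rw [card_filter, ← sum_range_tsub hf]
  refine sum_congr rfl fun x _ => ?_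
  have := hf x.le_succ
  have := hstep x
  split_ifs <;> omega

theorem stmt_18_general (a₁ a₂ : ℕ) (h₁ : 0 < a₁) :
    ((Finset.range a₁).filter fun x => x * a₂ / a₁ < (x + 1) * a₂ / a₁).card
      = min a₁ a₂ := by
  rcases le_total a₁ a₂ with h | h
  · rw [min_eq_left h, filter_true_of_mem, card_range]
    exact fun x _ => Nat.mul_div_add_one_le_succ_mul_div h₁ h x
  · rw [min_eq_right h, card_filter_lt_succ_eq_sub (Nat.monotone_mul_div a₁ a₂)
      (Nat.succ_mul_div_le_mul_div_add_one h₁ h), Nat.mul_div_cancel_left _ h₁]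
    simp

/-- The maximal Dyck path of type a₁ × a₂ has exactly min(a₁,a₂) corners.
The maximal Dyck path is the lattice path from (0,0) to (a₁,a₂) weakly below the
diagonal and as close to it as possible: its height after x horizontal steps is
⌊x·a₂/a₁⌋, and the (x+1)-st horizontal edge is the horizontal edge of a corner
exactly when ⌊(x+1)·a₂/a₁⌋ > ⌊x·a₂/a₁⌋. -/
theorem stmt_18 (a₁ a₂ : ℕ) (h₁ : 0 < a₁) (h₂ : 0 < a₂) :
    ((Finset.range a₁).filter fun x => x * a₂ / a₁ < (x + 1) * a₂ / a₁).card
      = min a₁ a₂ :=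
  stmt_18_general a₁ a₂ h₁
end

section
/- Let R be a commutative ring and x, x' elements of a domain containing R with x·x' = p + q for fixed nonzero p, q ∈ R. For a ∈ ℤ define z[a] = x^{−a} if a ≤ 0 and z[a] = (x')^a if a > 0. Then for any a, b ∈ ℤ, the product z[a]·z[b] is an R-linear combination of elements z[c] with [c]₊ ≤ [a+b]₊, where [t]₊ = max(t,0). -/
/-! Writing `z[a] = x ^ [-a]₊ * x' ^ [a]₊`, the product `z[a] * z[b]` is `x ^ m * x' ^ n` with
`n - m = a + b`; cancelling `min m n` factors `x * x' = p + q` leaves `(p + q) ^ min m n * z[a + b]`,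
a single standard monomial with `c = a + b`. -/

section StdMonomial

variable {M : Type*}

def stdMonomial [Monoid M] (x x' : M) (a : ℤ) : M :=
  if a ≤ 0 then x ^ (-a).toNat else x' ^ a.toNat

theorem stdMonomial_eq_pow_mul_pow [Monoid M] (x x' : M) (a : ℤ) :
    stdMonomial x x' a = x ^ (-a).toNat * x' ^ a.toNat := by
  unfold stdMonomial
  split_ifs with ha
  · rw [Int.toNat_of_nonpos ha, pow_zero, mul_one]
  · rw [Int.toNat_of_nonpos (show -a ≤ 0 by omega), pow_zero, one_mul]

theorem pow_mul_pow_eq_mul_pow_min_mul [CommMonoid M] (x y : M) (m n : ℕ) :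
    x ^ m * y ^ n = (x * y) ^ min m n * (x ^ (m - n) * y ^ (n - m)) := by
  calc x ^ m * y ^ n = x ^ (min m n + (m - n)) * y ^ (min m n + (n - m)) := by
        congr 2 <;> omega
    _ = (x * y) ^ min m n * (x ^ (m - n) * y ^ (n - m)) := by
        rw [pow_add, pow_add, mul_pow, mul_mul_mul_comm]

theorem stdMonomial_mul_stdMonomial {R S : Type*} [CommSemiring R] [CommSemiring S] [Algebra R S]
    {x x' : S} {r : R} (hx : x * x' = algebraMap R S r) (a b : ℤ) :
    stdMonomial x x' a * stdMonomial x x' b =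
      algebraMap R S (r ^ min ((-a).toNat + (-b).toNat) (a.toNat + b.toNat)) *
        stdMonomial x x' (a + b) := by
  have hneg : (-(a + b)).toNat = (-a).toNat + (-b).toNat - (a.toNat + b.toNat) := by omega
  have hpos : (a + b).toNat = a.toNat + b.toNat - ((-a).toNat + (-b).toNat) := by omega
  calc stdMonomial x x' a * stdMonomial x x' b
      = x ^ ((-a).toNat + (-b).toNat) * x' ^ (a.toNat + b.toNat) := by
        simp only [stdMonomial_eq_pow_mul_pow, pow_add]
        ring
    _ = _ := by
        rw [pow_mul_pow_eq_mul_pow_min_mul, hx, map_pow, stdMonomial_eq_pow_mul_pow, hneg, hpos]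

end StdMonomial

theorem stmt_19_general (R S : Type*) [CommRing R] [CommRing S] [Algebra R S]
    (x x' : S) (p q : R)
    (hx : x * x' = algebraMap R S p + algebraMap R S q) :
    let z : ℤ → S := fun a => if a ≤ 0 then x ^ (-a).toNat else x' ^ a.toNat
    ∀ a b : ℤ, ∃ (s : Finset ℤ) (u : ℤ → R),
      (∀ c ∈ s, max c 0 ≤ max (a + b) 0) ∧
      z a * z b = ∑ c ∈ s, algebraMap R S (u c) * z c := by
  intro z a b
  rw [← map_add] at hx
  refine ⟨{a + b}, fun _ => (p + q) ^ min ((-a).toNat + (-b).toNat) (a.toNat + b.toNat),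
    fun c hc => by rw [Finset.mem_singleton.1 hc], ?_⟩
  rw [Finset.sum_singleton]
  exact stdMonomial_mul_stdMonomial hx a b

/-- Rank-one standard monomials: if x·x' = p + q with p, q ∈ R nonzero, and
z[a] = x^{−a} for a ≤ 0, z[a] = (x')^a for a > 0, then z[a]·z[b] is an R-linear
combination of z[c]'s with [c]₊ ≤ [a+b]₊. -/
theorem stmt_19 (R S : Type*) [CommRing R] [CommRing S] [IsDomain S] [Algebra R S]
    (x x' : S) (p q : R) (hp : p ≠ 0) (hq : q ≠ 0)
    (hx : x * x' = algebraMap R S p + algebraMap R S q) :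
    let z : ℤ → S := fun a => if a ≤ 0 then x ^ (-a).toNat else x' ^ a.toNat
    ∀ a b : ℤ, ∃ (s : Finset ℤ) (u : ℤ → R),
      (∀ c ∈ s, max c 0 ≤ max (a + b) 0) ∧
      z a * z b = ∑ c ∈ s, algebraMap R S (u c) * z c :=
  stmt_19_general R S x x' p q hx
end
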